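/- arXiv:2004.06702 — 8 statements merged into one kernel-verified Lean document; each statement's English description precedes it below -/
import Mathlib

section
/- For every real number x with 0 ≤ x ≤ 1 and every real number λ > 0, one has 1 - (1-x)^λ ≥ (1/2)·min{1, λx}, where (1-x)^λ denotes the real power of the base 1-x ∈ [0,1]. -/
/-!
Since `1 - x ≤ exp (-x)`, the power `(1 - x) ^ λ` is at most `exp (-(λ x))`, so it suffices to show
`exp (-t) ≤ 1 - min 1 t / 2` for `t ≥ 0`. By monotonicity one may replace `t` by `min 1 t ∈ [0, 1]`,
where `exp s ≥ 1 + s` and `(1 + s) (1 - s / 2) ≥ 1` give `exp (-s) ≤ 1 - s / 2`.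
-/

open Real

lemma one_sub_rpow_le_exp_neg_mul {x : ℝ} (hx : x ≤ 1) {lam : ℝ} (hlam : 0 ≤ lam) :
    (1 - x) ^ lam ≤ exp (-(lam * x)) :=
  calc (1 - x) ^ lam ≤ exp (-x) ^ lam :=
        rpow_le_rpow (by linarith) (one_sub_le_exp_neg x) hlam
    _ = exp (-(lam * x)) := by rw [← exp_mul]; ring_nf

lemma exp_neg_le_one_sub_half {s : ℝ} (hs0 : 0 ≤ s) (hs1 : s ≤ 1) : exp (-s) ≤ 1 - s / 2 := by
  have key : 1 ≤ (s + 1) * (1 - s / 2) := by nlinarith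
  rw [exp_neg, inv_le_iff_one_le_mul₀' (exp_pos s)]
  exact key.trans (mul_le_mul_of_nonneg_right (add_one_le_exp s) (by linarith))

lemma exp_neg_le_one_sub_half_min {t : ℝ} (ht : 0 ≤ t) : exp (-t) ≤ 1 - min 1 t / 2 :=
  calc exp (-t) ≤ exp (-min 1 t) := exp_le_exp.mpr (neg_le_neg (min_le_right 1 t))
    _ ≤ 1 - min 1 t / 2 := exp_neg_le_one_sub_half (le_min zero_le_one ht) (min_le_left 1 t)

theorem stmt_0 (x : ℝ) (hx0 : 0 ≤ x) (hx1 : x ≤ 1) (lam : ℝ) (hlam : 0 < lam) :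
    1 - (1 - x) ^ lam ≥ (1 / 2) * min 1 (lam * x) := by
  have hpow := one_sub_rpow_le_exp_neg_mul hx1 hlam.le
  have hexp := exp_neg_le_one_sub_half_min (mul_nonneg hlam.le hx0)
  linarith
end

section
/- There exists N ∈ ℕ such that for all natural numbers n ≥ N, all natural numbers k with 2 ≤ k and 4k ≤ n, and every natural number λ with 1 ≤ λ ≤ 2^k·(n/k)^{k/2}: taking p = c = √(k/n) and λ_M = λ_C = λ, one has P(n,k,p,c,λ,λ) ≥ λ²·(k/n)^k / (40·32^k). (Hence, started in the local optimum of Jump_k, the (1+(λ,λ)) GA with these parameters needs an expected number of at most (n/k)^k·e^{O(k)}/λ² iterations, i.e. (n/k)^k·e^{O(k)}/λ fitness evaluations, to reach the global optimum.) -/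
/-!
Only the summands with `2k ≤ ℓ` are kept. With `p = √(k/n)` the hypothesis on `λ` reads
`λ p^k ≤ 2^k`, and `1 - (1 - x)^λ ≥ λx/2` whenever `λx ≤ 1`. Since
`C(n-k, ℓ-k) / C(n, ℓ) = C(ℓ, k) / C(n, k) ≥ ((ℓ-k)/n)^k ≥ (p/4)^k` once `ℓ - k ≥ np/4`, and
`(1-p)^(ℓ-k) ≥ 2^(-2p(ℓ-k))`, each such summand is at least its binomial weight times
`λ² p^(2k) / 2^(O(k))` as long as `p(ℓ-k) = O(k)`. It remains to find enough binomial mass at such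
`ℓ`: if `n ≥ 8k`, Chebyshev puts mass `1/3` on `|ℓ - np| < np/4`, where `ℓ > 3np/4 ≥ 2k`; if
`n < 8k`, then `n + 1 ≤ 2^k`, and a mode of `Bin(n, p)`, which has weight at least `1/(n+1)` and
lies within `1` of `(n+1)p ≥ 2k`, suffices.
-/

noncomputable def P (n k : ℕ) (p c : ℝ) (lM lC : ℕ) : ℝ :=
  (n.choose k : ℝ) * p ^ k * (1 - p) ^ (n - k) * (1 - (1 - 1 / (n.choose k : ℝ)) ^ lM)
  + ∑ l ∈ Finset.Icc (k + 1) (2 * k - 1),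
      (n.choose l : ℝ) * p ^ l * (1 - p) ^ (n - l)
        * (((n - k).choose (l - k) : ℝ) / (n.choose l : ℝ)) ^ lM
        * (1 - (1 - c ^ k * (1 - c) ^ (l - k)) ^ lC)
  + ∑ l ∈ Finset.Icc (2 * k) n,
      (n.choose l : ℝ) * p ^ l * (1 - p) ^ (n - l)
        * (1 - (1 - ((n - k).choose (l - k) : ℝ) / (n.choose l : ℝ)) ^ lM)
        * (1 - (1 - c ^ k * (1 - c) ^ (l - k)) ^ lC)


open Finset

noncomputable def binomWeight (n : ℕ) (p : ℝ) (l : ℕ) : ℝ :=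
  n.choose l * p ^ l * (1 - p) ^ (n - l)

namespace binomWeight

variable {n : ℕ} {p : ℝ}

lemma nonneg (hp0 : 0 ≤ p) (hp1 : p ≤ 1) (l : ℕ) : 0 ≤ binomWeight n p l := by
  unfold binomWeight
  have : 0 ≤ 1 - p := by linarith
  positivity

variable (n p)

lemma sum_range : ∑ l ∈ range (n + 1), binomWeight n p l = 1 := by
  have h := add_pow p (1 - p) n
  rw [add_sub_cancel, one_pow] at h
  rw [h]
  exact sum_congr rfl fun l _ => by unfold binomWeight; ring

lemma sum_sq_sub_mul :
    ∑ l ∈ range (n + 1), (n * p - l) ^ 2 * binomWeight n p l = n * p * (1 - p) := by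
  simpa [Polynomial.eval_finsetSum, binomWeight, bernsteinPolynomial, mul_assoc]
    using congrArg (Polynomial.eval p) (bernsteinPolynomial.variance ℝ n)

lemma succ_mul {l : ℕ} (hl : l < n) :
    binomWeight n p (l + 1) * ((l + 1) * (1 - p)) = binomWeight n p l * ((n - l : ℕ) * p) := by
  have hchoose : (n.choose (l + 1) * (l + 1) : ℝ) = n.choose l * (n - l : ℕ) := by
    exact_mod_cast Nat.choose_succ_right_eq n l
  have hpow : (1 - p) ^ (n - l) = (1 - p) ^ (n - (l + 1)) * (1 - p) := by
    rw [← pow_succ]; congr 1; omega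
  unfold binomWeight
  rw [hpow, pow_succ]
  linear_combination p ^ l * p * (1 - p) ^ (n - (l + 1)) * (1 - p) * hchoose

lemma one_sub_div_sq_le_sum_near (hp0 : 0 ≤ p) (hp1 : p ≤ 1) {t : ℝ} (ht : 0 < t) :
    1 - n * p * (1 - p) / t ^ 2 ≤
      ∑ l ∈ (range (n + 1)).filter (fun l : ℕ => |n * p - l| < t), binomWeight n p l := by
  set far := (range (n + 1)).filter (fun l : ℕ => ¬ |n * p - l| < t)
  have chebyshev : t ^ 2 * ∑ l ∈ far, binomWeight n p l ≤ n * p * (1 - p) := by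
    rw [← sum_sq_sub_mul n p, mul_sum]
    refine (sum_le_sum fun l hl => ?_).trans
      (sum_le_sum_of_subset_of_nonneg (filter_subset _ _) fun l _ _ => ?_)
    · have hfar : t ≤ |n * p - l| := not_lt.1 (mem_filter.1 hl).2
      have hsq : t ^ 2 ≤ (n * p - l) ^ 2 := by
        rw [← sq_abs (n * p - l)]; exact pow_le_pow_left₀ ht.le hfar 2
      exact mul_le_mul_of_nonneg_right hsq (nonneg hp0 hp1 l)
    · exact mul_nonneg (sq_nonneg _) (nonneg hp0 hp1 l)
  have hfar : ∑ l ∈ far, binomWeight n p l ≤ n * p * (1 - p) / t ^ 2 := by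
    rw [le_div_iff₀ (by positivity)]; linarith
  have htotal := sum_filter_add_sum_filter_not (range (n + 1))
    (fun l : ℕ => |n * p - l| < t) (binomWeight n p)
  rw [sum_range] at htotal
  linarith

lemma exists_mode (hp0 : 0 < p) (hp1 : p < 1) :
    ∃ m ≤ n, (n + 1) * p ≤ m + 1 ∧ (m : ℝ) ≤ (n + 1) * p ∧
      1 ≤ (n + 1) * binomWeight n p m := by
  obtain ⟨m, hm, hmax⟩ :=
    exists_max_image (range (n + 1)) (binomWeight n p) nonempty_range_add_one
  have hmn : m ≤ n := Nat.lt_succ_iff.1 (mem_range.1 hm)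
  have hmass : 1 ≤ (n + 1) * binomWeight n p m := by
    calc 1 = ∑ l ∈ range (n + 1), binomWeight n p l := (sum_range n p).symm
      _ ≤ ∑ l ∈ range (n + 1), binomWeight n p m := sum_le_sum hmax
      _ = (n + 1) * binomWeight n p m := by simp
  have hpos : 0 < binomWeight n p m := by
    by_contra! h
    nlinarith [mul_le_mul_of_nonneg_left h (by positivity : (0 : ℝ) ≤ n + 1)]
  -- by `succ_mul`, the weight strictly increases from `j` to `j + 1` iff `j + 1 < (n + 1) p`
  refine ⟨m, hmn, ?_, ?_, hmass⟩
  · by_contra! h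
    have hmn' : m < n := by
      have : (m : ℝ) < n := by nlinarith
      exact_mod_cast this
    have step := succ_mul n p hmn'
    have hle := hmax (m + 1) (mem_range.2 (by omega))
    rw [Nat.cast_sub hmn'.le] at step
    nlinarith [mul_le_mul_of_nonneg_right hle (by positivity : (0 : ℝ) ≤ (m + 1) * (1 - p))]
  · by_contra! h
    obtain ⟨j, rfl⟩ : ∃ j, m = j + 1 :=
      Nat.exists_eq_succ_of_ne_zero (by rintro rfl; push_cast at h; nlinarith)
    have step := succ_mul n p (l := j) (by omega)
    have hle := hmax j (mem_range.2 (by omega))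
    rw [Nat.cast_sub (by omega : j ≤ n)] at step
    have hjn : (j : ℝ) + 1 ≤ n := by exact_mod_cast hmn
    push_cast at h step
    have hcoeff : (0 : ℝ) ≤ (n - j) * p := mul_nonneg (by linarith) hp0.le
    nlinarith [mul_le_mul_of_nonneg_right hle hcoeff]

end binomWeight

lemma one_sub_one_sub_pow_nonneg {y : ℝ} (h0 : 0 ≤ y) (h1 : y ≤ 1) (m : ℕ) :
    0 ≤ 1 - (1 - y) ^ m :=
  sub_nonneg.2 (pow_le_one₀ (by linarith) (by linarith))

lemma mul_div_two_le_one_sub_one_sub_pow {a y : ℝ} {m : ℕ} (ha : 0 ≤ a) (hay : a ≤ y)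
    (hy : y ≤ 1) (hma : m * a ≤ 1) : m * a / 2 ≤ 1 - (1 - y) ^ m := by
  have hbernoulli : (1 + m * a) * (1 - a) ^ m ≤ 1 :=
    calc (1 + m * a) * (1 - a) ^ m ≤ (1 + a) ^ m * (1 - a) ^ m :=
          mul_le_mul_of_nonneg_right (one_add_mul_le_pow (by linarith) m)
            (pow_nonneg (by linarith) m)
      _ = (1 - a ^ 2) ^ m := by rw [← mul_pow]; ring
      _ ≤ 1 := pow_le_one₀ (by nlinarith) (by nlinarith)
  have hmono : (1 - y) ^ m ≤ (1 - a) ^ m := pow_le_pow_left₀ (by linarith) (by linarith) m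
  have hma0 : 0 ≤ m * a := by positivity
  nlinarith [mul_nonneg hma0 (sub_nonneg.2 hma)]

lemma pow_mul_one_sub_pow_nonneg {c : ℝ} (hc0 : 0 ≤ c) (hc1 : c ≤ 1) (i j : ℕ) :
    0 ≤ c ^ i * (1 - c) ^ j :=
  mul_nonneg (pow_nonneg hc0 i) (pow_nonneg (sub_nonneg.2 hc1) j)

lemma pow_mul_one_sub_pow_le_one {c : ℝ} (hc0 : 0 ≤ c) (hc1 : c ≤ 1) (i j : ℕ) :
    c ^ i * (1 - c) ^ j ≤ 1 :=
  mul_le_one₀ (pow_le_one₀ hc0 hc1) (pow_nonneg (sub_nonneg.2 hc1) j)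
    (pow_le_one₀ (sub_nonneg.2 hc1) (by linarith))

lemma inv_two_pow_le_one_sub_pow {c : ℝ} {j E : ℕ} (hc0 : 0 ≤ c) (hc : c ≤ 1 / 2)
    (hE : 2 * c * j ≤ E) : ((2 : ℝ) ^ E)⁻¹ ≤ (1 - c) ^ j := by
  -- weighted AM-GM of `1/2` and `1`: the convex `2 ^ (-2c)` lies below its chord `1 - c`
  have hchord : (2 : ℝ) ^ (-(2 * c)) ≤ 1 - c := by
    have h := Real.geom_mean_le_arith_mean2_weighted (p₁ := 1 / 2) (p₂ := 1)
      (by linarith : 0 ≤ 2 * c) (by linarith : 0 ≤ 1 - 2 * c) (by norm_num) (by norm_num)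
      (by ring)
    rw [Real.one_rpow, mul_one, one_div, Real.inv_rpow (by norm_num),
      ← Real.rpow_neg (by norm_num)] at h
    linarith
  calc ((2 : ℝ) ^ E)⁻¹ = (2 : ℝ) ^ (-(E : ℝ)) := by
        rw [Real.rpow_neg (by norm_num), Real.rpow_natCast]
    _ ≤ (2 : ℝ) ^ (-(2 * c) * j) := Real.rpow_le_rpow_of_exponent_le (by norm_num) (by linarith)
    _ = ((2 : ℝ) ^ (-(2 * c))) ^ j := by rw [Real.rpow_mul (by norm_num), Real.rpow_natCast]
    _ ≤ (1 - c) ^ j := pow_le_pow_left₀ (by positivity) hchord j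

lemma rpow_div_two_eq_inv_sqrt_pow {x y : ℝ} (hx : 0 ≤ x) (hy : 0 ≤ y) (k : ℕ) :
    (x / y) ^ ((k : ℝ) / 2) = (√(y / x) ^ k)⁻¹ := by
  rw [← inv_div, Real.inv_rpow (div_nonneg hy hx), Real.sqrt_eq_rpow, ← Real.rpow_natCast,
    ← Real.rpow_mul (div_nonneg hy hx), one_div_mul_eq_div]

lemma eight_mul_le_two_pow {k : ℕ} (hk : 6 ≤ k) : 8 * k ≤ 2 ^ k := by
  induction k, hk using Nat.le_induction with
  | base => norm_num
  | succ k hk ih => rw [pow_succ]; omega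

namespace Nat

lemma cast_choose_sub_div_choose {n k l : ℕ} (hkl : k ≤ l) (hln : l ≤ n) :
    ((n - k).choose (l - k) : ℝ) / n.choose l = (l.choose k : ℝ) / n.choose k := by
  have hnl : (0 : ℝ) < n.choose l := by exact_mod_cast Nat.choose_pos hln
  have hnk : (0 : ℝ) < n.choose k := by exact_mod_cast Nat.choose_pos (hkl.trans hln)
  rw [div_eq_div_iff hnl.ne' hnk.ne']
  have h := congrArg (Nat.cast : ℕ → ℝ) (Nat.choose_mul (n := n) hkl)
  push_cast at h
  linarith

lemma cast_choose_sub_div_choose_le_one {n k l : ℕ} (hkl : k ≤ l) (hln : l ≤ n) :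
    ((n - k).choose (l - k) : ℝ) / n.choose l ≤ 1 := by
  rw [cast_choose_sub_div_choose hkl hln,
    div_le_one (by exact_mod_cast Nat.choose_pos (hkl.trans hln))]
  exact_mod_cast Nat.choose_le_choose k hln

lemma div_pow_le_cast_choose_sub_div_choose {n k l : ℕ} (hkl : k ≤ l) (hln : l ≤ n) :
    (((l - k : ℕ) : ℝ) / n) ^ k ≤ ((n - k).choose (l - k) : ℝ) / n.choose l := by
  obtain rfl | hn := n.eq_zero_or_pos
  · obtain rfl : l = 0 := by omega
    obtain rfl : k = 0 := by omega
    simp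
  have hnk : (0 : ℝ) < n.choose k := by exact_mod_cast Nat.choose_pos (hkl.trans hln)
  rw [cast_choose_sub_div_choose hkl hln, div_pow, div_le_div_iff₀ (by positivity) hnk]
  have key : (l - k) ^ k * n.descFactorial k ≤ l.descFactorial k * n ^ k :=
    Nat.mul_le_mul ((Nat.pow_le_pow_left (by omega) k).trans (Nat.pow_sub_le_descFactorial l k))
      (Nat.descFactorial_le_pow n k)
  rw [Nat.descFactorial_eq_factorial_mul_choose, Nat.descFactorial_eq_factorial_mul_choose,
    mul_left_comm, mul_assoc] at key
  exact_mod_cast Nat.le_of_mul_le_mul_left key (Nat.factorial_pos k)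

end Nat

noncomputable def successTerm (n k : ℕ) (p c : ℝ) (lM lC l : ℕ) : ℝ :=
  binomWeight n p l * (1 - (1 - ((n - k).choose (l - k) : ℝ) / n.choose l) ^ lM)
    * (1 - (1 - c ^ k * (1 - c) ^ (l - k)) ^ lC)

lemma sum_successTerm_le_P {n k lM lC : ℕ} {p c : ℝ} (hp0 : 0 ≤ p) (hp1 : p ≤ 1) (hc0 : 0 ≤ c)
    (hc1 : c ≤ 1) {S : Finset ℕ} (hS : S ⊆ Icc (2 * k) n) :
    ∑ l ∈ S, successTerm n k p c lM lC l ≤ P n k p c lM lC := by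
  have hcrossover (l : ℕ) : 0 ≤ 1 - (1 - c ^ k * (1 - c) ^ (l - k)) ^ lC :=
    one_sub_one_sub_pow_nonneg (pow_mul_one_sub_pow_nonneg hc0 hc1 _ _)
      (pow_mul_one_sub_pow_le_one hc0 hc1 _ _) lC
  have hfirst : 0 ≤ binomWeight n p k * (1 - (1 - 1 / (n.choose k : ℝ)) ^ lM) :=
    mul_nonneg (binomWeight.nonneg hp0 hp1 k)
      (one_sub_one_sub_pow_nonneg (by positivity) (by simpa using Nat.cast_inv_le_one _) lM)
  have hmiddle : 0 ≤ ∑ l ∈ Icc (k + 1) (2 * k - 1), binomWeight n p l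
      * (((n - k).choose (l - k) : ℝ) / n.choose l) ^ lM
      * (1 - (1 - c ^ k * (1 - c) ^ (l - k)) ^ lC) :=
    sum_nonneg fun l _ =>
      mul_nonneg (mul_nonneg (binomWeight.nonneg hp0 hp1 l) (by positivity)) (hcrossover l)
  have hlast : ∑ l ∈ Icc (2 * k) n, successTerm n k p c lM lC l ≤ P n k p c lM lC :=
    le_add_of_nonneg_left (add_nonneg hfirst hmiddle)
  refine le_trans (sum_le_sum_of_subset_of_nonneg hS fun l hl _ => ?_) hlast
  obtain ⟨h2kl, hln⟩ := mem_Icc.1 hl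
  refine mul_nonneg (mul_nonneg (binomWeight.nonneg hp0 hp1 l) ?_) (hcrossover l)
  exact one_sub_one_sub_pow_nonneg (by positivity)
    (Nat.cast_choose_sub_div_choose_le_one (by omega) hln) lM

lemma le_successTerm {n k l E lam : ℕ} {p : ℝ} (hn : 0 < n) (hp0 : 0 ≤ p) (hp : p ≤ 1 / 2)
    (hkE : k ≤ E) (hlam : lam * p ^ k ≤ 2 ^ k) (hkl : k ≤ l) (hln : l ≤ n)
    (hl : n * p / 4 ≤ (l - k : ℕ)) (hE : 2 * p * (l - k : ℕ) ≤ E) :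
    binomWeight n p l * (lam ^ 2 * p ^ (2 * k) / 2 ^ (2 * k + E + 2))
      ≤ successTerm n k p p lam lam l := by
  have hq : (p / 4) ^ k ≤ ((n - k).choose (l - k) : ℝ) / n.choose l := by
    refine le_trans (pow_le_pow_left₀ (by positivity) ?_ k)
      (Nat.div_pow_le_cast_choose_sub_div_choose hkl hln)
    rw [le_div_iff₀ (by exact_mod_cast hn)]
    linarith
  have hlamq : lam * (p / 4) ^ k ≤ 1 := by
    rw [div_pow, ← mul_div_assoc, div_le_one (by positivity)]
    exact hlam.trans (pow_le_pow_left₀ (by norm_num) (by norm_num) k)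
  have hr : p ^ k * ((2 : ℝ) ^ E)⁻¹ ≤ p ^ k * (1 - p) ^ (l - k) :=
    mul_le_mul_of_nonneg_left (inv_two_pow_le_one_sub_pow hp0 hp hE) (by positivity)
  have hlamr : lam * (p ^ k * ((2 : ℝ) ^ E)⁻¹) ≤ 1 := by
    rw [← mul_assoc, ← div_eq_mul_inv, div_le_one (by positivity)]
    exact hlam.trans (pow_le_pow_right₀ (by norm_num) hkE)
  have hmutation := mul_div_two_le_one_sub_one_sub_pow (by positivity) hq
    (Nat.cast_choose_sub_div_choose_le_one hkl hln) hlamq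
  have hcrossover := mul_div_two_le_one_sub_one_sub_pow (by positivity) hr
    (pow_mul_one_sub_pow_le_one hp0 (by linarith) _ _) hlamr
  have hweight := binomWeight.nonneg (n := n) hp0 (by linarith) l
  have h4 : (4 : ℝ) ^ k = 2 ^ (2 * k) := by rw [pow_mul]; norm_num
  calc binomWeight n p l * (lam ^ 2 * p ^ (2 * k) / 2 ^ (2 * k + E + 2))
      = binomWeight n p l * (lam * (p / 4) ^ k / 2)
          * (lam * (p ^ k * ((2 : ℝ) ^ E)⁻¹) / 2) := by
        rw [div_pow, h4]; field_simp; ring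
    _ ≤ successTerm n k p p lam lam l :=
        mul_le_mul (mul_le_mul_of_nonneg_left hmutation hweight) hcrossover (by positivity)
          (mul_nonneg hweight ((by positivity : (0 : ℝ) ≤ _).trans hmutation))

section SqrtRate

variable {n k lam : ℕ} {p : ℝ}

lemma le_P_of_eight_mul_le (hp : 0 < p) (hpk : n * p ^ 2 = k) (hkn : 8 * k ≤ n)
    (h24 : 24 ≤ n * p) (hlam : lam * p ^ k ≤ 2 ^ k) :
    lam ^ 2 * p ^ (2 * k) / (12 * 32 ^ k) ≤ P n k p p lam lam := by
  have hn : 0 < n := Nat.pos_of_ne_zero (by rintro rfl; norm_num at h24)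
  have hknR : 8 * (k : ℝ) ≤ n := by exact_mod_cast hkn
  have hp2 : p ≤ 1 / 2 := by nlinarith
  set μ := n * p
  have hμk : 8 * k / 3 ≤ μ := by nlinarith
  set W := (range (n + 1)).filter (fun l : ℕ => |μ - l| < μ / 4)
  have hmass : 1 / 3 ≤ ∑ l ∈ W, binomWeight n p l := by
    have hnear := binomWeight.one_sub_div_sq_le_sum_near n p hp.le (by linarith)
      (t := μ / 4) (by positivity)
    have hvar : n * p * (1 - p) / (μ / 4) ^ 2 ≤ 2 / 3 := by
      rw [div_le_iff₀ (by positivity)]; nlinarith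
    linarith
  have hW : ∀ l ∈ W, 2 * k ≤ l ∧ l ≤ n ∧ 3 * μ / 4 < l ∧ (l : ℝ) < 5 * μ / 4 := by
    intro l hl
    obtain ⟨hl, hnear⟩ := mem_filter.1 hl
    rw [abs_lt] at hnear
    refine ⟨?_, Nat.lt_succ_iff.1 (mem_range.1 hl), by linarith, by linarith⟩
    exact_mod_cast (by push_cast; linarith : ((2 * k : ℕ) : ℝ) ≤ l)
  have hterm : ∀ l ∈ W, binomWeight n p l * (lam ^ 2 * p ^ (2 * k) / 2 ^ (2 * k + 3 * k + 2))
      ≤ successTerm n k p p lam lam l := by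
    intro l hl
    obtain ⟨h2kl, hln, hlow, hup⟩ := hW l hl
    have hcast : ((l - k : ℕ) : ℝ) = l - k := Nat.cast_sub (by omega)
    refine le_successTerm hn hp.le hp2 (by omega) hlam (by omega) hln ?_ ?_ <;> rw [hcast]
    · linarith
    · push_cast; nlinarith
  have h32 : (32 : ℝ) ^ k = 2 ^ (5 * k) := by rw [pow_mul]; norm_num
  calc lam ^ 2 * p ^ (2 * k) / (12 * 32 ^ k)
      = 1 / 3 * (lam ^ 2 * p ^ (2 * k) / 2 ^ (2 * k + 3 * k + 2)) := by
        rw [h32]; field_simp; ring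
    _ ≤ ∑ l ∈ W, binomWeight n p l * (lam ^ 2 * p ^ (2 * k) / 2 ^ (2 * k + 3 * k + 2)) := by
        rw [← sum_mul]; exact mul_le_mul_of_nonneg_right hmass (by positivity)
    _ ≤ ∑ l ∈ W, successTerm n k p p lam lam l := sum_le_sum hterm
    _ ≤ P n k p p lam lam := sum_successTerm_le_P hp.le (by linarith) hp.le (by linarith)
        fun l hl => mem_Icc.2 ⟨(hW l hl).1, (hW l hl).2.1⟩

lemma le_P_of_lt_eight_mul (hp : 0 < p) (hpk : n * p ^ 2 = k) (hk : 2 ≤ k) (hkn : 4 * k ≤ n)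
    (hn : n + 1 ≤ 2 ^ k) (hlam : lam * p ^ k ≤ 2 ^ k) :
    lam ^ 2 * p ^ (2 * k) / (12 * 32 ^ k) ≤ P n k p p lam lam := by
  have hknR : 4 * (k : ℝ) ≤ n := by exact_mod_cast hkn
  have hkR : (2 : ℝ) ≤ k := by exact_mod_cast hk
  have hp2 : p ≤ 1 / 2 := by
    have : p ^ 2 ≤ 1 / 4 := by nlinarith
    nlinarith
  have hμk : 2 * k ≤ n * p := by nlinarith
  obtain ⟨m, hmn, hlow, hup, hmass⟩ := binomWeight.exists_mode n p hp (by linarith)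
  have h2km : 2 * k ≤ m := by
    have : ((2 * k : ℕ) : ℝ) < m + 1 := by push_cast; nlinarith
    exact_mod_cast Nat.lt_succ_iff.1 (by exact_mod_cast this)
  have hcast : ((m - k : ℕ) : ℝ) = m - k := Nat.cast_sub (by omega)
  have hterm : binomWeight n p m * (lam ^ 2 * p ^ (2 * k) / 2 ^ (2 * k + (2 * k + 1) + 2))
      ≤ successTerm n k p p lam lam m := by
    refine le_successTerm (by omega) hp.le hp2 (by omega) hlam (by omega) hmn ?_ ?_ <;>
      rw [hcast]
    · nlinarith
    · push_cast; nlinarith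
  have hn2 : ((n : ℝ) + 1) ≤ 2 ^ k := by exact_mod_cast hn
  have hden : ((n : ℝ) + 1) * 2 ^ (2 * k + (2 * k + 1) + 2) ≤ 12 * 32 ^ k := by
    have h32 : (32 : ℝ) ^ k = 2 ^ (5 * k) := by rw [pow_mul]; norm_num
    calc ((n : ℝ) + 1) * 2 ^ (2 * k + (2 * k + 1) + 2)
        ≤ 2 ^ k * 2 ^ (2 * k + (2 * k + 1) + 2) := by gcongr
      _ = 8 * 32 ^ k := by rw [h32]; ring
      _ ≤ 12 * 32 ^ k := by gcongr; norm_num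
  calc lam ^ 2 * p ^ (2 * k) / (12 * 32 ^ k)
      ≤ 1 / (n + 1) * (lam ^ 2 * p ^ (2 * k) / 2 ^ (2 * k + (2 * k + 1) + 2)) := by
        rw [div_mul_div_comm, one_mul]
        exact div_le_div_of_nonneg_left (by positivity) (by positivity) hden
    _ ≤ binomWeight n p m * (lam ^ 2 * p ^ (2 * k) / 2 ^ (2 * k + (2 * k + 1) + 2)) := by
        gcongr
        rw [div_le_iff₀ (by positivity)]; linarith
    _ ≤ successTerm n k p p lam lam m := hterm
    _ = ∑ l ∈ {m}, successTerm n k p p lam lam l := (sum_singleton _ _).symm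
    _ ≤ P n k p p lam lam := sum_successTerm_le_P hp.le (by linarith) hp.le (by linarith)
        (singleton_subset_iff.2 (mem_Icc.2 ⟨h2km, hmn⟩))

end SqrtRate

theorem stmt_8 : ∃ N : ℕ, ∀ n : ℕ, N ≤ n → ∀ k : ℕ, 2 ≤ k → 4 * k ≤ n →
    ∀ lam : ℕ, 1 ≤ lam → (lam : ℝ) ≤ 2 ^ k * ((n : ℝ) / (k : ℝ)) ^ ((k : ℝ) / 2) →
    P n k (Real.sqrt ((k : ℝ) / (n : ℝ))) (Real.sqrt ((k : ℝ) / (n : ℝ))) lam lam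
      ≥ (lam : ℝ) ^ 2 * ((k : ℝ) / (n : ℝ)) ^ k / (40 * 32 ^ k) := by
  refine ⟨288, fun n hn k hk hkn lam _ hlam => ?_⟩
  have hnR : (288 : ℝ) ≤ n := by exact_mod_cast hn
  have hkR : (2 : ℝ) ≤ k := by exact_mod_cast hk
  set p := √((k : ℝ) / n)
  have hp : 0 < p := Real.sqrt_pos.2 (by positivity)
  have hp2 : p ^ 2 = k / n := Real.sq_sqrt (by positivity)
  have hpk : n * p ^ 2 = k := by rw [hp2]; field_simp
  have hlamp : lam * p ^ k ≤ 2 ^ k := by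
    rwa [rpow_div_two_eq_inv_sqrt_pow (by positivity) (by positivity), ← div_eq_mul_inv,
      le_div_iff₀ (by positivity)] at hlam
  have h40 : lam ^ 2 * (k / n : ℝ) ^ k / (40 * 32 ^ k)
      ≤ lam ^ 2 * p ^ (2 * k) / (12 * 32 ^ k) := by
    rw [pow_mul, hp2]; gcongr; norm_num
  refine h40.trans ?_
  rcases le_or_gt (8 * k) n with h8 | h8
  · exact le_P_of_eight_mul_le hp hpk h8 (by nlinarith) hlamp
  · have hk6 : 6 ≤ k := by omega
    exact le_P_of_lt_eight_mul hp hpk hk hkn (by linarith [eight_mul_le_two_pow hk6]) hlamp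
end

section
/- For all natural numbers n and k with 1 ≤ k and 4k ≤ n, all reals p, c ∈ [0,1], and all natural numbers λ_M, λ_C ≥ 1: P(n,k,p,c,λ_M,λ_C) ≤ λ_M·(λ_C + 1)·(k/(2n))^k. (Hence the probability that the (1+(λ,λ)) GA, started in the local optimum of Jump_k, finds the global optimum in one iteration is at most λ_M(λ_C+1)(k/(2n))^k, for every choice of the parameters.) -/
open Finset Real

lemma one_sub_one_sub_pow_le_mul {x : ℝ} (hx : x ≤ 1) (m : ℕ) : 1 - (1 - x) ^ m ≤ m * x := by
  have := one_add_mul_le_pow (a := -x) (by linarith) m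
  rw [← sub_eq_add_neg] at this
  linarith

lemma one_sub_one_sub_pow_nonneg_s10 {x : ℝ} (hx0 : 0 ≤ x) (hx1 : x ≤ 1) (m : ℕ) :
    0 ≤ 1 - (1 - x) ^ m :=
  sub_nonneg.2 (pow_le_one₀ (by linarith) (by linarith))

lemma mul_exp_neg_mul_le {a : ℝ} (ha : 0 < a) (x : ℝ) : x * exp (-(a * x)) ≤ exp (-1) / a := by
  rw [le_div_iff₀ ha]
  nlinarith [mul_exp_neg_le_exp_neg_one (a * x)]

/-- Via `1 - q ≤ exp (-q)`, the left side is at most `(q exp (-q (n - k) / k)) ^ k`, whose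
maximum over `q` is `(k / (e (n - k))) ^ k`. -/
lemma pow_mul_one_sub_pow_le {n k : ℕ} (hkn : 4 * k ≤ n) {q : ℝ} (hq0 : 0 ≤ q) (hq1 : q ≤ 1) :
    q ^ k * (1 - q) ^ (n - k) ≤ ((k : ℝ) / (2 * n)) ^ k := by
  rcases Nat.eq_zero_or_pos k with rfl | hk
  · simpa using pow_le_one₀ (sub_nonneg.2 hq1) (by linarith)
  have hkR : (0 : ℝ) < k := by exact_mod_cast hk
  have hnR : 4 * (k : ℝ) ≤ n := by exact_mod_cast hkn
  set a : ℝ := ((n : ℝ) - k) / k with ha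
  have ha0 : 0 < a := div_pos (by linarith) hkR
  have hexp : (1 - q) ^ (n - k) ≤ exp (-(a * q)) ^ k := by
    calc (1 - q) ^ (n - k) ≤ exp (-q) ^ (n - k) :=
          pow_le_pow_left₀ (by linarith) (one_sub_le_exp_neg q) _
      _ = exp (-(a * q)) ^ k := by
          rw [← exp_nat_mul, ← exp_nat_mul, Nat.cast_sub (by omega), ha]
          field_simp
  have hbase : q * exp (-(a * q)) ≤ (k : ℝ) / (2 * n) := by
    refine (mul_exp_neg_mul_le ha0 q).trans ?_
    have he : (2.7182818283 : ℝ) < exp 1 := exp_one_gt_d9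
    have hka : (k : ℝ) * a = n - k := by rw [ha]; field_simp
    rw [div_le_div_iff₀ ha0 (by linarith), hka, exp_neg, inv_mul_le_iff₀ (exp_pos 1)]
    nlinarith
  calc q ^ k * (1 - q) ^ (n - k) ≤ q ^ k * exp (-(a * q)) ^ k :=
        mul_le_mul_of_nonneg_left hexp (by positivity)
    _ = (q * exp (-(a * q))) ^ k := (mul_pow _ _ _).symm
    _ ≤ ((k : ℝ) / (2 * n)) ^ k := pow_le_pow_left₀ (by positivity) hbase k

lemma choose_sub_le_choose {n k l : ℕ} (hkl : k ≤ l) (hln : l ≤ n) :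
    (n - k).choose (l - k) ≤ n.choose l := by
  rw [← Nat.choose_symm (by omega), ← Nat.choose_symm hln, show n - k - (l - k) = n - l by omega]
  exact Nat.choose_le_choose _ (Nat.sub_le n k)

noncomputable def hitProb (n k : ℕ) (p c : ℝ) (l : ℕ) : ℝ :=
  ((n - k).choose (l - k) : ℝ) * p ^ l * (1 - p) ^ (n - l) * (c ^ k * (1 - c) ^ (l - k))

lemma hitProb_nonneg {n k : ℕ} {p c : ℝ} (hp0 : 0 ≤ p) (hp1 : p ≤ 1) (hc0 : 0 ≤ c) (hc1 : c ≤ 1)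
    (l : ℕ) : 0 ≤ hitProb n k p c l := by
  unfold hitProb
  have := sub_nonneg.2 hp1
  have := sub_nonneg.2 hc1
  positivity

lemma sum_hitProb_eq {n k : ℕ} (hkn : k ≤ n) (p c : ℝ) :
    ∑ l ∈ Ico k (n + 1), hitProb n k p c l = (p * c) ^ k * (1 - p * c) ^ (n - k) := by
  rw [sum_Ico_eq_sum_range, show n + 1 - k = n - k + 1 by omega,
    show 1 - p * c = p * (1 - c) + (1 - p) by ring, add_pow, mul_sum]
  refine sum_congr rfl fun m _ => ?_
  rw [hitProb, Nat.add_sub_cancel_left, show n - (k + m) = n - k - m by omega, mul_pow, mul_pow]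
  ring

lemma sum_Icc_hitProb_le {n k : ℕ} (hkn : 2 * k ≤ n) {p c : ℝ} (hp0 : 0 ≤ p) (hp1 : p ≤ 1)
    (hc0 : 0 ≤ c) (hc1 : c ≤ 1) :
    ∑ l ∈ Icc (k + 1) (2 * k - 1), hitProb n k p c l + ∑ l ∈ Icc (2 * k) n, hitProb n k p c l
      ≤ (p * c) ^ k * (1 - p * c) ^ (n - k) := by
  have hdisj : Disjoint (Icc (k + 1) (2 * k - 1)) (Icc (2 * k) n) :=
    disjoint_left.2 fun l h₁ h₂ => by simp only [mem_Icc] at h₁ h₂; omega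
  rw [← sum_union hdisj, ← sum_hitProb_eq (by omega)]
  refine sum_le_sum_of_subset_of_nonneg ?_ fun l _ _ => hitProb_nonneg hp0 hp1 hc0 hc1 l
  intro l hl
  simp only [mem_union, mem_Icc, mem_Ico] at hl ⊢
  omega

lemma summand_le_hitProb {n k l lM lC : ℕ} (hln : l ≤ n) {p c F : ℝ} (hp0 : 0 ≤ p) (hp1 : p ≤ 1)
    (hc0 : 0 ≤ c) (hc1 : c ≤ 1) (hF0 : 0 ≤ F)
    (hF : F ≤ lM * (((n - k).choose (l - k) : ℝ) / (n.choose l : ℝ))) :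
    (n.choose l : ℝ) * p ^ l * (1 - p) ^ (n - l) * F
        * (1 - (1 - c ^ k * (1 - c) ^ (l - k)) ^ lC)
      ≤ lM * lC * hitProb n k p c l := by
  have hchoose : (0 : ℝ) < n.choose l := by exact_mod_cast Nat.choose_pos hln
  have hs0 : 0 ≤ c ^ k * (1 - c) ^ (l - k) := by have := sub_nonneg.2 hc1; positivity
  have hs1 : c ^ k * (1 - c) ^ (l - k) ≤ 1 :=
    mul_le_one₀ (pow_le_one₀ hc0 hc1) (by positivity) (pow_le_one₀ (by linarith) (by linarith))
  have hA0 : 0 ≤ (n.choose l : ℝ) * p ^ l * (1 - p) ^ (n - l) := by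
    have := sub_nonneg.2 hp1; positivity
  calc _ ≤ (n.choose l : ℝ) * p ^ l * (1 - p) ^ (n - l)
          * (lM * (((n - k).choose (l - k) : ℝ) / (n.choose l : ℝ)))
          * (lC * (c ^ k * (1 - c) ^ (l - k))) :=
        mul_le_mul (mul_le_mul_of_nonneg_left hF hA0) (one_sub_one_sub_pow_le_mul hs1 lC)
          (one_sub_one_sub_pow_nonneg_s10 hs0 hs1 lC) (mul_nonneg hA0 (hF0.trans hF))
    _ = lM * lC * hitProb n k p c l := by
        rw [hitProb]
        field_simp

lemma leading_term_le {n k : ℕ} (hkn : k ≤ n) {p : ℝ} (hp0 : 0 ≤ p) (hp1 : p ≤ 1) (lM : ℕ) :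
    (n.choose k : ℝ) * p ^ k * (1 - p) ^ (n - k) * (1 - (1 - 1 / (n.choose k : ℝ)) ^ lM)
      ≤ lM * (p ^ k * (1 - p) ^ (n - k)) := by
  have hchoose : (1 : ℝ) ≤ n.choose k := by exact_mod_cast Nat.choose_pos hkn
  have hA0 : 0 ≤ (n.choose k : ℝ) * p ^ k * (1 - p) ^ (n - k) := by
    have := sub_nonneg.2 hp1; positivity
  calc _ ≤ (n.choose k : ℝ) * p ^ k * (1 - p) ^ (n - k) * (lM * (1 / (n.choose k : ℝ))) :=
        mul_le_mul_of_nonneg_left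
          (one_sub_one_sub_pow_le_mul ((div_le_one (by linarith)).2 hchoose) lM) hA0
    _ = lM * (p ^ k * (1 - p) ^ (n - k)) := by field_simp

lemma choose_sub_div_choose_le_one {n k l : ℕ} (hkl : k ≤ l) (hln : l ≤ n) :
    ((n - k).choose (l - k) : ℝ) / (n.choose l : ℝ) ≤ 1 :=
  div_le_one_of_le₀ (by exact_mod_cast choose_sub_le_choose hkl hln) (Nat.cast_nonneg _)

lemma summand_pow_le_hitProb {n k l lM lC : ℕ} (hkl : k ≤ l) (hln : l ≤ n) (hlM : 1 ≤ lM)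
    {p c : ℝ} (hp0 : 0 ≤ p) (hp1 : p ≤ 1) (hc0 : 0 ≤ c) (hc1 : c ≤ 1) :
    (n.choose l : ℝ) * p ^ l * (1 - p) ^ (n - l)
        * (((n - k).choose (l - k) : ℝ) / (n.choose l : ℝ)) ^ lM
        * (1 - (1 - c ^ k * (1 - c) ^ (l - k)) ^ lC)
      ≤ lM * lC * hitProb n k p c l := by
  have hr1 := choose_sub_div_choose_le_one hkl hln
  refine summand_le_hitProb hln hp0 hp1 hc0 hc1 (by positivity) ?_
  exact (pow_le_of_le_one (by positivity) hr1 (by omega)).trans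
    (le_mul_of_one_le_left (by positivity) (by exact_mod_cast hlM))

lemma summand_one_sub_pow_le_hitProb {n k l lM lC : ℕ} (hkl : k ≤ l) (hln : l ≤ n)
    {p c : ℝ} (hp0 : 0 ≤ p) (hp1 : p ≤ 1) (hc0 : 0 ≤ c) (hc1 : c ≤ 1) :
    (n.choose l : ℝ) * p ^ l * (1 - p) ^ (n - l)
        * (1 - (1 - ((n - k).choose (l - k) : ℝ) / (n.choose l : ℝ)) ^ lM)
        * (1 - (1 - c ^ k * (1 - c) ^ (l - k)) ^ lC)
      ≤ lM * lC * hitProb n k p c l := by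
  have hr1 := choose_sub_div_choose_le_one hkl hln
  exact summand_le_hitProb hln hp0 hp1 hc0 hc1
    (one_sub_one_sub_pow_nonneg_s10 (by positivity) hr1 lM) (one_sub_one_sub_pow_le_mul hr1 lM)

theorem stmt_10_general (n k : ℕ) (hkn : 4 * k ≤ n)
    (p c : ℝ) (hp0 : 0 ≤ p) (hp1 : p ≤ 1) (hc0 : 0 ≤ c) (hc1 : c ≤ 1)
    (lM lC : ℕ) (hlM : 1 ≤ lM) :
    P n k p c lM lC ≤ (lM : ℝ) * ((lC : ℝ) + 1) * ((k : ℝ) / (2 * (n : ℝ))) ^ k := by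
  calc P n k p c lM lC
      ≤ lM * (p ^ k * (1 - p) ^ (n - k))
          + ∑ l ∈ Icc (k + 1) (2 * k - 1), lM * lC * hitProb n k p c l
          + ∑ l ∈ Icc (2 * k) n, lM * lC * hitProb n k p c l := by
        refine add_le_add (add_le_add (leading_term_le (by omega) hp0 hp1 lM)
          (sum_le_sum fun l hl => ?_)) (sum_le_sum fun l hl => ?_) <;> rw [mem_Icc] at hl
        · exact summand_pow_le_hitProb (by omega) (by omega) hlM hp0 hp1 hc0 hc1
        · exact summand_one_sub_pow_le_hitProb (by omega) hl.2 hp0 hp1 hc0 hc1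
    _ = lM * (p ^ k * (1 - p) ^ (n - k)) + lM * lC * (∑ l ∈ Icc (k + 1) (2 * k - 1),
          hitProb n k p c l + ∑ l ∈ Icc (2 * k) n, hitProb n k p c l) := by
        rw [mul_add, mul_sum, mul_sum, add_assoc]
    _ ≤ lM * ((k : ℝ) / (2 * n)) ^ k + lM * lC * ((k : ℝ) / (2 * n)) ^ k := by
        gcongr
        · exact pow_mul_one_sub_pow_le hkn hp0 hp1
        · exact (sum_Icc_hitProb_le (by omega) hp0 hp1 hc0 hc1).trans
            (pow_mul_one_sub_pow_le hkn (mul_nonneg hp0 hc0) (mul_le_one₀ hp1 hc0 hc1))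
    _ = lM * (lC + 1) * ((k : ℝ) / (2 * n)) ^ k := by ring

theorem stmt_10 (n k : ℕ) (hk : 1 ≤ k) (hkn : 4 * k ≤ n)
    (p c : ℝ) (hp0 : 0 ≤ p) (hp1 : p ≤ 1) (hc0 : 0 ≤ c) (hc1 : c ≤ 1)
    (lM lC : ℕ) (hlM : 1 ≤ lM) (hlC : 1 ≤ lC) :
    P n k p c lM lC ≤ (lM : ℝ) * ((lC : ℝ) + 1) * ((k : ℝ) / (2 * (n : ℝ))) ^ k :=
  stmt_10_general n k hkn p c hp0 hp1 hc0 hc1 lM lC hlM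
end

section
/- For all natural numbers n and k with 1 ≤ k ≤ n-1 and 2k ≤ n, and every real x ∈ [0,1]: x^k·(1-x)^{n-k} ≤ (k/(2n))^k. -/
/-! Weighted AM–GM shows that `x ^ k * (1 - x) ^ m` is maximal on `[0, 1]` at `x = k / (k + m)`,
so it is at most `(k / n) ^ k * (m / n) ^ m` with `n = k + m`. When `k ≤ m`, Bernoulli's inequality
`2 ^ (k / m) ≤ 1 + k / m` gives `(n / m) ^ m ≥ 2 ^ k`, i.e. `(m / n) ^ m ≤ (1 / 2) ^ k`. -/

theorem pow_mul_pow_le_one_of_weighted_mean_eq_one {p q : ℝ} (hp : 0 ≤ p) (hq : 0 ≤ q) {k m : ℕ}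
    (hkm : 0 < k + m) (h : k * p + m * q = k + m) : p ^ k * q ^ m ≤ 1 := by
  have hn : (0 : ℝ) < k + m := by exact_mod_cast hkm
  have amgm := Real.geom_mean_le_arith_mean2_weighted (w₁ := k / (k + m)) (w₂ := m / (k + m))
    (by positivity) (by positivity) hp hq (by field_simp)
  have hmean : k / (k + m) * p + m / (k + m) * q = 1 := by field_simp; linarith
  rw [hmean] at amgm
  calc p ^ k * q ^ m = ((p ^ ((k : ℝ) / (k + m)) * q ^ ((m : ℝ) / (k + m))) ^ ((k : ℝ) + m)) := by
        rw [Real.mul_rpow (by positivity) (by positivity), ← Real.rpow_mul hp, ← Real.rpow_mul hq,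
          div_mul_cancel₀ _ hn.ne', div_mul_cancel₀ _ hn.ne', Real.rpow_natCast, Real.rpow_natCast]
    _ ≤ 1 := Real.rpow_le_one (by positivity) amgm hn.le

theorem pow_mul_one_sub_pow_le_s13 {x : ℝ} (hx0 : 0 ≤ x) (hx1 : x ≤ 1) {k m : ℕ} (hk : 0 < k)
    (hm : 0 < m) : x ^ k * (1 - x) ^ m ≤ (k / (k + m)) ^ k * (m / (k + m)) ^ m := by
  have hk' : (0 : ℝ) < k := by exact_mod_cast hk
  have hm' : (0 : ℝ) < m := by exact_mod_cast hm
  set p := (k + m) * x / k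
  set q := (k + m) * (1 - x) / m
  have hpq : p ^ k * q ^ m ≤ 1 := by
    refine pow_mul_pow_le_one_of_weighted_mean_eq_one (by positivity)
      (div_nonneg (mul_nonneg (by positivity) (sub_nonneg.2 hx1)) hm'.le) (by omega) ?_
    simp only [p]; field_simp; ring
  calc x ^ k * (1 - x) ^ m = (k / (k + m)) ^ k * (m / (k + m)) ^ m * (p ^ k * q ^ m) := by
        rw [mul_mul_mul_comm, ← mul_pow, ← mul_pow]
        congr 2
        · simp only [p]; field_simp
        · simp only [q]; field_simp
    _ ≤ (k / (k + m)) ^ k * (m / (k + m)) ^ m :=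
        mul_le_of_le_one_right (by positivity) hpq

theorem two_pow_le_one_add_div_pow {k m : ℕ} (hkm : k ≤ m) : (2 : ℝ) ^ k ≤ (1 + k / m) ^ m := by
  rcases Nat.eq_zero_or_pos m with rfl | hm
  · simp [Nat.le_zero.1 hkm]
  have hm' : (0 : ℝ) < m := by exact_mod_cast hm
  have bernoulli : (2 : ℝ) ^ ((k : ℝ) / m) ≤ 1 + k / m := by
    simpa [one_add_one_eq_two] using rpow_one_add_le_one_add_mul_self (s := 1) (by norm_num)
      (p := (k : ℝ) / m) (by positivity) ((div_le_one hm').2 (by exact_mod_cast hkm))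
  calc (2 : ℝ) ^ k = ((2 : ℝ) ^ ((k : ℝ) / m)) ^ m := by
        rw [← Real.rpow_natCast _ m, ← Real.rpow_mul (by norm_num), div_mul_cancel₀ _ hm'.ne',
          Real.rpow_natCast]
    _ ≤ (1 + k / m) ^ m := pow_le_pow_left₀ (by positivity) bernoulli m

theorem div_add_pow_le_half_pow {k m : ℕ} (hkm : k ≤ m) :
    ((m : ℝ) / (k + m)) ^ m ≤ (1 / 2 : ℝ) ^ k := by
  rcases Nat.eq_zero_or_pos m with rfl | hm
  · simp [Nat.le_zero.1 hkm]
  have hm' : (0 : ℝ) < m := by exact_mod_cast hm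
  have hdiv : (m : ℝ) / (k + m) = (1 + (k : ℝ) / m)⁻¹ := by field_simp; ring
  rw [hdiv, inv_pow, one_div_pow, one_div]
  exact inv_anti₀ (by positivity) (two_pow_le_one_add_div_pow hkm)

theorem stmt_13_general (n k : ℕ) (hk : 1 ≤ k) (h2k : 2 * k ≤ n)
    (x : ℝ) (hx0 : 0 ≤ x) (hx1 : x ≤ 1) :
    x ^ k * (1 - x) ^ (n - k) ≤ ((k : ℝ) / (2 * (n : ℝ))) ^ k := by
  obtain ⟨m, rfl⟩ : ∃ m, n = k + m := ⟨n - k, by omega⟩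
  rw [Nat.add_sub_cancel_left]
  push_cast
  calc x ^ k * (1 - x) ^ m ≤ (k / (k + m)) ^ k * (m / (k + m)) ^ m :=
        pow_mul_one_sub_pow_le_s13 hx0 hx1 hk (by omega)
    _ ≤ (k / (k + m)) ^ k * (1 / 2 : ℝ) ^ k :=
        mul_le_mul_of_nonneg_left (div_add_pow_le_half_pow (by omega)) (by positivity)
    _ = ((k : ℝ) / (2 * (k + m))) ^ k := by rw [← mul_pow]; field_simp

theorem stmt_13 (n k : ℕ) (hk : 1 ≤ k) (hkn : k ≤ n - 1) (h2k : 2 * k ≤ n)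
    (x : ℝ) (hx0 : 0 ≤ x) (hx1 : x ≤ 1) :
    x ^ k * (1 - x) ^ (n - k) ≤ ((k : ℝ) / (2 * (n : ℝ))) ^ k :=
  stmt_13_general n k hk h2k x hx0 hx1
end

section
/- For all natural numbers n and k with 2 ≤ k and 4k ≤ n, and all real numbers λ_M ≥ 1 and λ_C ≥ 1: max{λ_M + λ_C, (λ_M + λ_C)/(λ_M·(λ_C + 1)·(k/(2n))^k)} ≥ 2·(2n/k)^{k/2} - 1. (Since the per-iteration probability of leaving the local optimum of Jump_k is at most λ_M(λ_C+1)(k/(2n))^k, this shows that the expected number of fitness evaluations of the (1+(λ,λ)) GA started in the local optimum of Jump_k is at least 2(2n/k)^{k/2} - 1 for every choice of parameters.) -/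
/-!
Write `s = λ_M + λ_C` and `q = (2n/k)^{k/2}`, so that `(k/(2n))^k = q⁻²`. By AM-GM,
`λ_M (λ_C + 1) ≤ (s + 1)² / 4`, hence the second term of the maximum is at least
`4 s q² / (s + 1)²`. This is decreasing in `s ≥ 1` and equals `2q - 1` at `s = 2q - 1`,
so whenever the first term `s` is below `2q - 1` the second one is above it.
-/

lemma mul_add_one_le_sq_div_four (a b : ℝ) : a * (b + 1) ≤ (a + b + 1) ^ 2 / 4 := by
  nlinarith [sq_nonneg (a - b - 1)]

lemma two_mul_sub_one_le_max (q s : ℝ) (hs : 1 ≤ s) :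
    2 * q - 1 ≤ max s (4 * s * q ^ 2 / (s + 1) ^ 2) := by
  rcases le_or_gt (2 * q - 1) s with hle | hlt
  · exact le_max_of_le_left hle
  · apply le_max_of_le_right
    rw [le_div_iff₀ (by positivity)]
    -- `4 s q² - (2q - 1)(s + 1)² = (2q - 1 - s)((2q - 1)s - 1)`
    nlinarith [mul_pos (sub_pos.2 hlt) (show 0 < (2 * q - 1) * s - 1 by nlinarith)]

lemma two_mul_sub_one_le_max_div (a b q : ℝ) (ha : 0 < a) (hb : 0 < b + 1) (hab : 1 ≤ a + b) :
    2 * q - 1 ≤ max (a + b) ((a + b) / (a * (b + 1) * (q ^ 2)⁻¹)) := by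
  refine (two_mul_sub_one_le_max q (a + b) hab).trans (max_le_max le_rfl ?_)
  rw [← div_eq_mul_inv, div_div_eq_mul_div, div_le_div_iff₀ (by positivity) (by positivity)]
  have hAMGM := mul_add_one_le_sq_div_four a b
  have hsq : 0 ≤ (a + b) * q ^ 2 := by nlinarith [sq_nonneg q]
  nlinarith [mul_le_mul_of_nonneg_left hAMGM hsq]

lemma Real.rpow_natCast_div_two_sq {x : ℝ} (hx : 0 ≤ x) (k : ℕ) :
    (x ^ ((k : ℝ) / 2)) ^ 2 = x ^ k := by
  rw [← Real.rpow_natCast _ 2, ← Real.rpow_mul hx, ← Real.rpow_natCast x k]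
  push_cast
  ring_nf

theorem stmt_14_general (n k : ℕ)
    (lM lC : ℝ) (hlM : 1 ≤ lM) (hlC : 1 ≤ lC) :
    max (lM + lC) ((lM + lC) / (lM * (lC + 1) * ((k : ℝ) / (2 * (n : ℝ))) ^ k))
      ≥ 2 * ((2 * (n : ℝ)) / (k : ℝ)) ^ ((k : ℝ) / 2) - 1 := by
  have hp : ((k : ℝ) / (2 * n)) ^ k = ((((2 * n : ℝ) / k) ^ ((k : ℝ) / 2)) ^ 2)⁻¹ := by
    rw [Real.rpow_natCast_div_two_sq (by positivity), ← inv_pow, inv_div]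
  rw [hp]
  exact two_mul_sub_one_le_max_div lM lC _ (by linarith) (by linarith) (by linarith)

theorem stmt_14 (n k : ℕ) (hk : 2 ≤ k) (hkn : 4 * k ≤ n)
    (lM lC : ℝ) (hlM : 1 ≤ lM) (hlC : 1 ≤ lC) :
    max (lM + lC) ((lM + lC) / (lM * (lC + 1) * ((k : ℝ) / (2 * (n : ℝ))) ^ k))
      ≥ 2 * ((2 * (n : ℝ)) / (k : ℝ)) ^ ((k : ℝ) / 2) - 1 :=
  stmt_14_general n k lM lC hlM hlC
end

section
/- For every real x with 1 ≤ x ≤ 9, one has x^{⌈x⌉}·e^{-x}/(⌈x⌉)! ≥ 0.12, where ⌈x⌉ denotes the ceiling of x. -/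
/-! On `[0, k]` the map `x ↦ x ^ k * exp (-x)` is nondecreasing (its logarithmic derivative
is `k / x - 1`). With `n = ⌈x⌉₊` we have `max 1 (n - 1) ≤ x ≤ n`, so the quantity is at least
its value at the left endpoint `max 1 (n - 1)`, and the nine resulting inequalities for
`n = 1, …, 9` are checked numerically with `exp 1 < 2.7182818286`. -/

open Real Set

theorem pow_mul_exp_neg_monotoneOn (k : ℕ) :
    MonotoneOn (fun x : ℝ => x ^ k * exp (-x)) (Icc 0 k) := by
  rintro a ⟨ha, -⟩ x ⟨hx, hxk⟩ hax
  rcases hx.eq_or_lt with rfl | hx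
  · rw [le_antisymm hax ha]
  have hratio : a / x ≤ exp ((a - x) / x) := by
    simpa [sub_div, div_self hx.ne'] using add_one_le_exp ((a - x) / x)
  have hexponent : k * ((a - x) / x) ≤ a - x := by
    rw [← mul_div_assoc, div_le_iff₀ hx]
    nlinarith
  have hpow : a ^ k ≤ x ^ k * exp (a - x) := calc
    a ^ k = x ^ k * (a / x) ^ k := by rw [div_pow, mul_div_cancel₀ _ (pow_ne_zero k hx.ne')]
    _ ≤ x ^ k * exp ((a - x) / x) ^ k := by gcongr
    _ = x ^ k * exp (k * ((a - x) / x)) := by rw [exp_nat_mul]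
    _ ≤ x ^ k * exp (a - x) := by gcongr
  calc a ^ k * exp (-a) ≤ x ^ k * exp (a - x) * exp (-a) := by gcongr
    _ = x ^ k * exp (-x) := by rw [mul_assoc, ← exp_add]; ring_nf

theorem inv_pow_le_exp_neg_natCast (m : ℕ) : ((2.7182818286 : ℝ) ^ m)⁻¹ ≤ exp (-m) := by
  rw [exp_neg, ← exp_one_pow]
  gcongr
  exact exp_one_lt_d9.le

theorem numeric_bound_at_left_endpoint {n : ℕ} (hn1 : 1 ≤ n) (hn9 : n ≤ 9) :
    0.12 * (n.factorial : ℝ) * (2.7182818286 : ℝ) ^ max 1 (n - 1) ≤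
      ((max 1 (n - 1) : ℕ) : ℝ) ^ n := by
  interval_cases n <;> norm_num [Nat.factorial]

theorem stmt_17 (x : ℝ) (hx1 : 1 ≤ x) (hx9 : x ≤ 9) :
    x ^ ⌈x⌉₊ * Real.exp (-x) / (Nat.factorial ⌈x⌉₊ : ℝ) ≥ 0.12 := by
  set n := ⌈x⌉₊
  have hn1 : 1 ≤ n := Nat.one_le_ceil_iff.2 (by linarith)
  have hn9 : n ≤ 9 := Nat.ceil_le.2 (by exact_mod_cast hx9)
  set m := max 1 (n - 1)
  have hmx : (m : ℝ) ≤ x := by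
    have : (n : ℝ) < x + 1 := Nat.ceil_lt_add_one (by linarith)
    rw [Nat.cast_max, Nat.cast_one, Nat.cast_sub hn1, Nat.cast_one]
    exact max_le hx1 (by linarith)
  have hxn : x ≤ n := Nat.le_ceil x
  have hmono := pow_mul_exp_neg_monotoneOn n ⟨m.cast_nonneg, hmx.trans hxn⟩
    ⟨by linarith, hxn⟩ hmx
  rw [ge_iff_le, le_div_iff₀ (by positivity)]
  calc 0.12 * (n.factorial : ℝ) ≤ (m : ℝ) ^ n * ((2.7182818286 : ℝ) ^ m)⁻¹ := by
        rw [← div_eq_mul_inv, le_div_iff₀ (by positivity)]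
        exact numeric_bound_at_left_endpoint hn1 hn9
    _ ≤ (m : ℝ) ^ n * exp (-m) := by gcongr; exact inv_pow_le_exp_neg_natCast m
    _ ≤ x ^ n * exp (-x) := hmono
end

section
/- For all natural numbers n and k with 1 ≤ k and 4k ≤ n, every natural number ℓ with 1 ≤ ℓ ≤ (5/4)·√(nk), and every real λ_C ≥ √(n/k): setting c = √(k/n), one has 1 - (1 - c·(1-c)^{ℓ-1})^{λ_C} ≥ (1/2)·4^{-5k/4}, where the outer power with exponent λ_C and the power 4^{-5k/4} are real powers. -/
/-!
With `c = √(k/n) ≤ 1/2`, Bernoulli's inequality gives `4^(-c) ≤ 1 - c`, so the probability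
`(1 - c)^(ℓ-1)` that no non-critical bit is taken from `x'` is at least `4^(-cℓ) ≥ 4^(-5k/4)`,
since `cℓ ≤ 5k/4`. A single crossover succeeds with probability `p = c (1 - c)^(ℓ-1)`, and
`p λ_C ≥ (1 - c)^(ℓ-1) ≥ q := 4^(-5k/4)` because `c √(n/k) = 1`. Finally
`(1 - p)^λ_C ≤ exp (-p λ_C) ≤ exp (-q) ≤ 1 - q/2` for `q ≤ 1`.
-/

open Real

lemma four_rpow_neg_le_one_sub {x : ℝ} (hx0 : 0 ≤ x) (hx : x ≤ 1 / 2) :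
    (4 : ℝ) ^ (-x) ≤ 1 - x := by
  have h4 : (4 : ℝ) ^ (-x) = (1 + (-1 / 2)) ^ (2 * x) := by
    rw [rpow_mul (by norm_num), rpow_neg (by norm_num), ← inv_rpow (by norm_num)]
    norm_num
  rw [h4]
  linarith [rpow_one_add_le_one_add_mul_self (s := -1 / 2) (by norm_num)
    (by positivity : 0 ≤ 2 * x) (by linarith)]

lemma four_rpow_neg_le_one_sub_pow {x a : ℝ} (hx0 : 0 ≤ x) (hx : x ≤ 1 / 2) {m : ℕ}
    (hm : x * m ≤ a) : (4 : ℝ) ^ (-a) ≤ (1 - x) ^ m :=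
  calc (4 : ℝ) ^ (-a) ≤ 4 ^ (-x * m) := rpow_le_rpow_of_exponent_le (by norm_num) (by linarith)
    _ = (4 ^ (-x)) ^ m := rpow_mul_natCast (by norm_num) _ _
    _ ≤ (1 - x) ^ m := pow_le_pow_left₀ (by positivity) (four_rpow_neg_le_one_sub hx0 hx) m

lemma one_sub_rpow_le_exp_neg_mul_s18 {p t : ℝ} (hp : p ≤ 1) (ht : 0 ≤ t) :
    (1 - p) ^ t ≤ exp (-(p * t)) := by
  rw [← neg_mul, exp_mul]
  exact rpow_le_rpow (by linarith) (one_sub_le_exp_neg p) ht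

lemma exp_neg_le_one_sub_half_s18 {q : ℝ} (hq0 : 0 ≤ q) (hq1 : q ≤ 1) :
    exp (-q) ≤ 1 - q / 2 := by
  rw [exp_neg, inv_le_iff_one_le_mul₀ (exp_pos q)]
  calc 1 ≤ (1 - q / 2) * (1 + q) := by nlinarith
    _ ≤ (1 - q / 2) * exp q := by gcongr; linarith; linarith [add_one_le_exp q]

lemma half_le_one_sub_one_sub_rpow {p t q : ℝ} (hp : p ≤ 1) (ht : 0 ≤ t)
    (hq0 : 0 ≤ q) (hq1 : q ≤ 1) (hqpt : q ≤ p * t) :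
    q / 2 ≤ 1 - (1 - p) ^ t := by
  have := calc
    (1 - p) ^ t ≤ exp (-(p * t)) := one_sub_rpow_le_exp_neg_mul_s18 hp ht
    _ ≤ exp (-q) := exp_le_exp.2 (by linarith)
    _ ≤ 1 - q / 2 := exp_neg_le_one_sub_half_s18 hq0 hq1
  linarith

lemma sqrt_div_le_half {a b : ℝ} (hb : 0 < b) (hab : 4 * a ≤ b) : √(a / b) ≤ 1 / 2 := by
  rw [sqrt_le_left (by norm_num), div_le_iff₀ hb]
  linarith

lemma sqrt_div_mul_sqrt_div {a b : ℝ} (ha : 0 < a) (hb : 0 < b) : √(a / b) * √(b / a) = 1 := by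
  rw [← sqrt_mul (div_pos ha hb).le, div_mul_div_cancel₀ hb.ne', div_self ha.ne', sqrt_one]

lemma sqrt_div_mul_sqrt_mul {a b : ℝ} (ha : 0 ≤ a) (hb : 0 < b) : √(a / b) * √(b * a) = a := by
  rw [← sqrt_mul (by positivity), show a / b * (b * a) = a * a by field_simp, sqrt_mul_self ha]

theorem stmt_18_general (n k : ℕ) (hk : 1 ≤ k) (hkn : 4 * k ≤ n)
    (l : ℕ) (hl2 : (l : ℝ) ≤ (5 / 4) * Real.sqrt ((n : ℝ) * (k : ℝ)))
    (lC : ℝ) (hlC : Real.sqrt ((n : ℝ) / (k : ℝ)) ≤ lC) :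
    1 - (1 - Real.sqrt ((k : ℝ) / (n : ℝ))
          * (1 - Real.sqrt ((k : ℝ) / (n : ℝ))) ^ (l - 1)) ^ lC
      ≥ (1 / 2) * (4 : ℝ) ^ (-(5 * (k : ℝ)) / 4) := by
  have hk0 : (0 : ℝ) < k := by exact_mod_cast hk
  have hkn' : 4 * (k : ℝ) ≤ n := by exact_mod_cast hkn
  have hn0 : (0 : ℝ) < n := by linarith
  set c := √((k : ℝ) / n)
  have hc0 : 0 ≤ c := sqrt_nonneg _
  have hc_half : c ≤ 1 / 2 := sqrt_div_le_half hn0 hkn'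
  have hcl : c * (l - 1 : ℕ) ≤ 5 * k / 4 :=
    calc c * (l - 1 : ℕ) ≤ c * l := by gcongr; exact_mod_cast Nat.sub_le l 1
      _ ≤ 5 / 4 * (c * √((n : ℝ) * k)) := by nlinarith
      _ = 5 * k / 4 := by rw [sqrt_div_mul_sqrt_mul hk0.le hn0]; ring
  have hsurvive : (4 : ℝ) ^ (-(5 * (k : ℝ)) / 4) ≤ (1 - c) ^ (l - 1) := by
    rw [neg_div]
    exact four_rpow_neg_le_one_sub_pow hc0 hc_half hcl
  have hsuccess : (1 - c) ^ (l - 1) ≤ c * (1 - c) ^ (l - 1) * lC :=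
    calc (1 - c) ^ (l - 1) = c * √((n : ℝ) / k) * (1 - c) ^ (l - 1) := by
          rw [sqrt_div_mul_sqrt_div hk0 hn0, one_mul]
      _ ≤ c * (1 - c) ^ (l - 1) * lC := by
          rw [mul_right_comm]
          gcongr
          exact mul_nonneg hc0 (pow_nonneg (by linarith) _)
  have := half_le_one_sub_one_sub_rpow (p := c * (1 - c) ^ (l - 1))
    (by nlinarith [pow_le_one₀ (n := l - 1) (by linarith : 0 ≤ 1 - c) (by linarith)])
    ((sqrt_nonneg _).trans hlC) (by positivity)
    (rpow_le_one_of_one_le_of_nonpos (by norm_num) (by linarith)) (hsurvive.trans hsuccess)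
  linarith

theorem stmt_18 (n k : ℕ) (hk : 1 ≤ k) (hkn : 4 * k ≤ n)
    (l : ℕ) (hl1 : 1 ≤ l) (hl2 : (l : ℝ) ≤ (5 / 4) * Real.sqrt ((n : ℝ) * (k : ℝ)))
    (lC : ℝ) (hlC : Real.sqrt ((n : ℝ) / (k : ℝ)) ≤ lC) :
    1 - (1 - Real.sqrt ((k : ℝ) / (n : ℝ))
          * (1 - Real.sqrt ((k : ℝ) / (n : ℝ))) ^ (l - 1)) ^ lC
      ≥ (1 / 2) * (4 : ℝ) ^ (-(5 * (k : ℝ)) / 4) :=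
  stmt_18_general n k hk hkn l hl2 lC hlC
end

section
/- For all natural numbers n, k, d, ℓ with 1 ≤ k ≤ d ≤ n and √(nk) ≤ ℓ ≤ n, one has (in the real numbers) C(n-d, ℓ)/C(n, ℓ) ≤ 1 - (1/2)·min{1, k^{3/2}/√n}. -/
/-!
Removing one element from an `m`-set scales the number of `l`-subsets by `(m - l) / m`,
which is at most `1 - l / n` when `m ≤ n`; hence
`C(n - k, l) / C(n, l) ≤ (1 - l / n) ^ k ≤ exp (-k l / n)`. The hypothesis `√(n k) ≤ l`
gives `k l / n ≥ k ^ (3/2) / √n`, and `exp (-t) ≤ 1 - t / 2` on `[0, 1]`.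
-/

open Real

namespace Nat

theorem choose_pred_mul_le {m n : ℕ} (l : ℕ) (hmn : m ≤ n) :
    (m - 1).choose l * n ≤ m.choose l * (n - l) := by
  rcases m.eq_zero_or_pos with rfl | hm
  · cases l <;> simp
  have pascal : (m - 1).choose l * m = m.choose l * (m - l) := by
    simpa [Nat.sub_add_cancel hm] using choose_mul_succ_eq (m - 1) l
  have ratio_mono : (m - l) * n ≤ (n - l) * m := by
    rw [Nat.sub_mul, Nat.sub_mul, Nat.mul_comm n m]
    exact Nat.sub_le_sub_left (Nat.mul_le_mul_left l hmn) _
  refine Nat.le_of_mul_le_mul_right ?_ hm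
  calc (m - 1).choose l * n * m = m.choose l * ((m - l) * n) := by
        rw [mul_right_comm, pascal, mul_assoc]
    _ ≤ m.choose l * ((n - l) * m) := Nat.mul_le_mul_left _ ratio_mono
    _ = m.choose l * (n - l) * m := by ring

theorem choose_sub_mul_pow_le (n l : ℕ) :
    ∀ j, (n - j).choose l * n ^ j ≤ n.choose l * (n - l) ^ j
  | 0 => by simp
  | j + 1 =>
    calc (n - (j + 1)).choose l * n ^ (j + 1) = (n - j - 1).choose l * n * n ^ j := by
          rw [Nat.sub_sub]; ring
      _ ≤ (n - j).choose l * (n - l) * n ^ j :=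
          Nat.mul_le_mul_right _ (choose_pred_mul_le l (n.sub_le j))
      _ = (n - j).choose l * n ^ j * (n - l) := by ring
      _ ≤ n.choose l * (n - l) ^ j * (n - l) :=
          Nat.mul_le_mul_right _ (choose_sub_mul_pow_le n l j)
      _ = n.choose l * (n - l) ^ (j + 1) := by ring

end Nat

theorem choose_sub_div_choose_le {n l : ℕ} (hl : l ≤ n) (j : ℕ) :
    ((n - j).choose l : ℝ) / n.choose l ≤ (1 - (l : ℝ) / n) ^ j := by
  rcases n.eq_zero_or_pos with rfl | hn
  · obtain rfl : l = 0 := Nat.le_zero.mp hl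
    simp
  have hn' : (0 : ℝ) < n := by exact_mod_cast hn
  rw [div_le_iff₀ (by exact_mod_cast Nat.choose_pos hl), one_sub_div hn'.ne', div_pow,
    div_mul_eq_mul_div, le_div_iff₀ (by positivity), ← Nat.cast_sub hl,
    mul_comm _ (n.choose l : ℝ)]
  exact_mod_cast Nat.choose_sub_mul_pow_le n l j

theorem one_sub_pow_le_exp_neg_mul {x : ℝ} (hx : x ≤ 1) (k : ℕ) :
    (1 - x) ^ k ≤ exp (-(k * x)) := by
  rw [neg_mul_eq_mul_neg, exp_nat_mul]
  exact pow_le_pow_left₀ (sub_nonneg.mpr hx) (one_sub_le_exp_neg x) k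

theorem exp_neg_le_one_sub_half_s19 {t : ℝ} (h0 : 0 ≤ t) (h1 : t ≤ 1) :
    exp (-t) ≤ 1 - t / 2 := by
  -- `exp (-t) ≤ 1 / (1 + t)` and `(1 - t / 2) (1 + t) = 1 + t (1 - t) / 2 ≥ 1`
  have hinv : exp (-t) * (1 + t) ≤ 1 := by
    calc exp (-t) * (1 + t) ≤ exp (-t) * exp t := by gcongr; linarith [add_one_le_exp t]
      _ = 1 := by rw [← exp_add, neg_add_cancel, exp_zero]
  nlinarith [exp_pos (-t), mul_nonneg h0 (sub_nonneg.mpr h1)]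

theorem rpow_three_halves_div_sqrt_le {n k l : ℝ} (hn : 0 ≤ n) (hk : 0 ≤ k)
    (hl : √(n * k) ≤ l) :
    k ^ ((3 : ℝ) / 2) / √n ≤ l * k / n := by
  rcases hn.eq_or_lt with rfl | hn
  · simp
  have h32 : k ^ ((3 : ℝ) / 2) = k * √k := by
    rw [sqrt_eq_rpow, show (3 : ℝ) / 2 = 1 + 1 / 2 by norm_num, rpow_add' hk (by norm_num),
      rpow_one]
  have hsqrt : √k / √n = √(n * k) / n := by
    rw [sqrt_mul hn.le, div_eq_div_iff (sqrt_pos.mpr hn).ne' hn.ne', mul_comm (√n), mul_assoc,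
      mul_self_sqrt hn.le]
  calc k ^ ((3 : ℝ) / 2) / √n = k * (√(n * k) / n) := by rw [h32, mul_div_assoc, hsqrt]
    _ ≤ k * (l / n) := by gcongr
    _ = l * k / n := by ring

theorem stmt_19_general (n k d l : ℕ) (hkd : k ≤ d)
    (hl1 : Real.sqrt ((n : ℝ) * (k : ℝ)) ≤ (l : ℝ)) (hl2 : l ≤ n) :
    ((n - d).choose l : ℝ) / (n.choose l : ℝ)
      ≤ 1 - (1 / 2) * min 1 ((k : ℝ) ^ ((3 : ℝ) / 2) / Real.sqrt (n : ℝ)) := by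
  set t := min 1 ((k : ℝ) ^ ((3 : ℝ) / 2) / √n)
  have ht : t ≤ k * (l / n) := calc
    t ≤ (k : ℝ) ^ ((3 : ℝ) / 2) / √n := min_le_right _ _
    _ ≤ l * k / n := rpow_three_halves_div_sqrt_le n.cast_nonneg k.cast_nonneg hl1
    _ = k * (l / n) := by ring
  calc ((n - d).choose l : ℝ) / n.choose l ≤ ((n - k).choose l : ℝ) / n.choose l := by gcongr
    _ ≤ (1 - (l : ℝ) / n) ^ k := choose_sub_div_choose_le hl2 k
    _ ≤ exp (-(k * (l / n))) :=
        one_sub_pow_le_exp_neg_mul (div_le_one_of_le₀ (by exact_mod_cast hl2) n.cast_nonneg) k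
    _ ≤ exp (-t) := by gcongr
    _ ≤ 1 - t / 2 :=
        exp_neg_le_one_sub_half_s19 (le_min zero_le_one (by positivity)) (min_le_left _ _)
    _ = 1 - 1 / 2 * t := by ring

theorem stmt_19 (n k d l : ℕ) (hk : 1 ≤ k) (hkd : k ≤ d) (hdn : d ≤ n)
    (hl1 : Real.sqrt ((n : ℝ) * (k : ℝ)) ≤ (l : ℝ)) (hl2 : l ≤ n) :
    ((n - d).choose l : ℝ) / (n.choose l : ℝ)
      ≤ 1 - (1 / 2) * min 1 ((k : ℝ) ^ ((3 : ℝ) / 2) / Real.sqrt (n : ℝ)) :=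
  stmt_19_general n k d l hkd hl1 hl2
end
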